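/- If β = 1−λ and λ ≠ 1/2 (equivalently λ ≠ β and λ = 1−β), then the non-unital associative subalgebra of the 4×4 real matrices generated by {l_o, l_a, l_b} equals M₁, the subspace of matrices whose only possibly nonzero entries are at positions (1,1), (2,1), (2,2), (2,3), (3,1), (3,3), (4,1), (4,2), (4,3). -/
import Mathlib

set_option maxHeartbeats 1000000


/-- The matrix of left multiplication by `o` in `B'(l, β)` in the ordered basis
`(o, a, b, ab)`: `l_o = E₁₁ + l·E₂₂ + l·E₃₃`. -/
noncomputable def lMo (l β : ℝ) : Matrix (Fin 4) (Fin 4) ℝ :=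
  !![1, 0, 0, 0;
     0, l, 0, 0;
     0, 0, l, 0;
     0, 0, 0, 0]

/-- The matrix of left multiplication by `a` in `B'(l, β)`:
`l_a = l·E₂₁ + E₂₂ + ((l-β)/l)·E₂₃ + ((l+β-1)/l)·E₃₃ + E₄₃`. -/
noncomputable def lMa (l β : ℝ) : Matrix (Fin 4) (Fin 4) ℝ :=
  !![0, 0, 0, 0;
     l, 1, (l - β) / l, 0;
     0, 0, (l + β - 1) / l, 0;
     0, 0, 1, 0]

/-- The matrix of left multiplication by `b` in `B'(l, β)`:
`l_b = ((l-β)/l)·E₂₂ + l·E₃₁ + ((l+β-1)/l)·E₃₂ + E₃₃ + E₄₂`. -/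
noncomputable def lMb (l β : ℝ) : Matrix (Fin 4) (Fin 4) ℝ :=
  !![0, 0, 0, 0;
     0, (l - β) / l, 0, 0;
     l, (l + β - 1) / l, 1, 0;
     0, 1, 0, 0]

/-- `M₁`: the 4×4 real matrices whose only possibly nonzero entries are at the
(1-indexed) positions (1,1), (2,1), (2,2), (2,3), (3,1), (3,3), (4,1), (4,2), (4,3). -/
def Mset1 : Set (Matrix (Fin 4) (Fin 4) ℝ) :=
  {m | m 0 1 = 0 ∧ m 0 2 = 0 ∧ m 0 3 = 0 ∧ m 1 3 = 0 ∧
       m 2 1 = 0 ∧ m 2 3 = 0 ∧ m 3 3 = 0}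

/-- Matrix units, as real 4×4 matrices. -/
def mE (i j : Fin 4) : Matrix (Fin 4) (Fin 4) ℝ := Matrix.single i j 1

@[simp] theorem mE_apply (i j i' j' : Fin 4) :
    mE i j i' j' = if i = i' ∧ j = j' then 1 else 0 := rfl

/-- `Mset1` is closed under the non-unital algebra operations. -/
def M1alg : NonUnitalSubalgebra ℝ (Matrix (Fin 4) (Fin 4) ℝ) where
  carrier := Mset1
  zero_mem' := by simp [Mset1]
  add_mem' := by
    rintro a b ⟨a1, a2, a3, a4, a5, a6, a7⟩ ⟨b1, b2, b3, b4, b5, b6, b7⟩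
    refine ⟨?_, ?_, ?_, ?_, ?_, ?_, ?_⟩ <;>
      simp [Matrix.add_apply, a1, a2, a3, a4, a5, a6, a7, b1, b2, b3, b4, b5, b6, b7]
  smul_mem' := by
    rintro r a ⟨a1, a2, a3, a4, a5, a6, a7⟩
    refine ⟨?_, ?_, ?_, ?_, ?_, ?_, ?_⟩ <;>
      simp [Matrix.smul_apply, a1, a2, a3, a4, a5, a6, a7]
  mul_mem' := by
    rintro a b ⟨a1, a2, a3, a4, a5, a6, a7⟩ ⟨b1, b2, b3, b4, b5, b6, b7⟩
    refine ⟨?_, ?_, ?_, ?_, ?_, ?_, ?_⟩ <;>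
      simp [Matrix.mul_apply, Matrix.vecMul, dotProduct, Matrix.vecHead, Matrix.vecTail, Function.comp, Fin.sum_univ_four,
        a1, a2, a3, a4, a5, a6, a7, b1, b2, b3, b4, b5, b6, b7]

theorem mem_of_smul_eq (S : NonUnitalSubalgebra ℝ (Matrix (Fin 4) (Fin 4) ℝ))
    {r : ℝ} (hr : r ≠ 0) {x y : Matrix (Fin 4) (Fin 4) ℝ}
    (h : r • x = y) (hy : y ∈ S) : x ∈ S := by
  have hx : x = r⁻¹ • y := by rw [← h, smul_smul, inv_mul_cancel₀ hr, one_smul]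
  rw [hx]
  exact SMulMemClass.smul_mem _ hy

/-- If `β = 1 - l` and `l ≠ 1/2` (equivalently `l ≠ β` and `l = 1 - β`), the non-unital
associative subalgebra of the 4×4 real matrices generated by `{l_o, l_a, l_b}` equals `M₁`. -/
theorem stmt_16 (l β : ℝ) (hl0 : 0 < l) (hl1 : l < 1) (hβ0 : 0 < β) (hβ1 : β < 1)
    (hβ : β = 1 - l) (hl : l ≠ 1 / 2) :
    (NonUnitalAlgebra.adjoin ℝ
        ({lMo l β, lMa l β, lMb l β} : Set (Matrix (Fin 4) (Fin 4) ℝ)) :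
      Set (Matrix (Fin 4) (Fin 4) ℝ)) = Mset1 := by
  subst hβ
  have hlne : l ≠ 0 := ne_of_gt hl0
  have h2l : 2 * l - 1 ≠ 0 := by
    intro h
    apply hl
    linarith
  have h1l : (1 : ℝ) - l ≠ 0 := by intro h; linarith
  set c : ℝ := (2 * l - 1) / l with hc
  have hc0 : c ≠ 0 := div_ne_zero h2l hlne
  have hc1 : (1 : ℝ) - c ≠ 0 := by
    rw [hc]
    intro h
    rw [sub_eq_zero] at h
    rw [eq_comm, div_eq_one_iff_eq hlne] at h
    have : l = 1 := by linarith
    linarith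
  have hcm1 : c - 1 ≠ 0 := by
    intro h
    apply hc1
    linarith
  set o := lMo l (1 - l) with ho'
  set a := lMa l (1 - l) with ha'
  set b := lMb l (1 - l) with hb'
  set S := NonUnitalAlgebra.adjoin ℝ ({o, a, b} : Set (Matrix (Fin 4) (Fin 4) ℝ)) with hS
  have ho : o ∈ S := NonUnitalAlgebra.subset_adjoin ℝ (by simp)
  have ha : a ∈ S := NonUnitalAlgebra.subset_adjoin ℝ (by simp)
  have hb : b ∈ S := NonUnitalAlgebra.subset_adjoin ℝ (by simp)
  -- E00
  have hE00 : mE 0 0 ∈ S := by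
    refine mem_of_smul_eq S h1l ?_ (sub_mem (mul_mem ho ho) (SMulMemClass.smul_mem l ho))
    ext i j
    fin_cases i <;> fin_cases j <;>
      simp [mE_apply, ho', lMo, Matrix.mul_apply, Matrix.vecMul, dotProduct, Matrix.vecHead, Matrix.vecTail, Function.comp, Fin.sum_univ_four] <;>
      ring
  -- E10
  have hE10 : mE 1 0 ∈ S := by
    refine mem_of_smul_eq S hlne ?_ (mul_mem ha hE00)
    ext i j
    fin_cases i <;> fin_cases j <;>
      simp [mE_apply, ha', lMa, Matrix.mul_apply, Matrix.vecMul, dotProduct, Matrix.vecHead, Matrix.vecTail, Function.comp, Fin.sum_univ_four]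
  -- E20
  have hE20 : mE 2 0 ∈ S := by
    refine mem_of_smul_eq S hlne ?_ (mul_mem hb hE00)
    ext i j
    fin_cases i <;> fin_cases j <;>
      simp [mE_apply, hb', lMb, Matrix.mul_apply, Matrix.vecMul, dotProduct, Matrix.vecHead, Matrix.vecTail, Function.comp, Fin.sum_univ_four]
  -- E30 = b * E10 - c • E10
  have hE30 : mE 3 0 ∈ S := by
    have heq : mE 3 0 = b * mE 1 0 - c • mE 1 0 := by
      ext i j
      fin_cases i <;> fin_cases j <;>
        simp [mE_apply, hb', lMb, hc, Matrix.mul_apply, Matrix.vecMul, dotProduct, Matrix.vecHead, Matrix.vecTail, Function.comp, Fin.sum_univ_four] <;>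
        (try field_simp) <;> (try ring)
    rw [heq]
    exact sub_mem (mul_mem hb hE10) (SMulMemClass.smul_mem c hE10)
  -- A1 = a - l • E10, B1 = b - l • E20
  have hA1 : a - l • mE 1 0 ∈ S := sub_mem ha (SMulMemClass.smul_mem l hE10)
  have hB1 : b - l • mE 2 0 ∈ S := sub_mem hb (SMulMemClass.smul_mem l hE20)
  -- E11
  have hE11 : mE 1 1 ∈ S := by
    refine mem_of_smul_eq S hc1 ?_ (sub_mem hA1 (mul_mem hA1 hB1))
    ext i j
    fin_cases i <;> fin_cases j <;>
      simp [mE_apply, ha', hb', lMa, lMb, hc,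
        Matrix.mul_apply, Matrix.vecMul, dotProduct, Matrix.vecHead, Matrix.vecTail, Function.comp, Fin.sum_univ_four] <;>
      (try field_simp) <;> (try ring)
  -- E12
  have hE12 : mE 1 2 ∈ S := by
    refine mem_of_smul_eq S hc0 ?_ (sub_mem (mul_mem hE11 hA1) hE11)
    ext i j
    fin_cases i <;> fin_cases j <;>
      simp [mE_apply, ha', lMa, hc,
        Matrix.mul_apply, Matrix.vecMul, dotProduct, Matrix.vecHead, Matrix.vecTail, Function.comp, Fin.sum_univ_four] <;>
      (try field_simp) <;> (try ring)
  -- E32 = A1 - E11 - c • E12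
  have hE32 : mE 3 2 ∈ S := by
    have heq : mE 3 2 = (a - l • mE 1 0) - mE 1 1 - c • mE 1 2 := by
      ext i j
      fin_cases i <;> fin_cases j <;>
        simp [mE_apply, ha', lMa, hc, Fin.sum_univ_four, Matrix.vecHead, Matrix.vecTail, Function.comp] <;>
        (try field_simp) <;> (try ring)
    rw [heq]
    exact sub_mem (sub_mem hA1 hE11) (SMulMemClass.smul_mem c hE12)
  -- C = B1 - c • E11
  have hC : b - l • mE 2 0 - c • mE 1 1 ∈ S := sub_mem hB1 (SMulMemClass.smul_mem c hE11)
  -- E31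
  have hE31 : mE 3 1 ∈ S := by
    refine mem_of_smul_eq S hcm1 ?_
      (sub_mem (mul_mem hC hB1) hC)
    ext i j
    fin_cases i <;> fin_cases j <;>
      simp [mE_apply, hb', lMb, hc,
        Matrix.mul_apply, Matrix.vecMul, dotProduct, Matrix.vecHead, Matrix.vecTail, Function.comp, Fin.sum_univ_four] <;>
      (try field_simp) <;> (try ring)
  -- E22 = C - E31
  have hE22 : mE 2 2 ∈ S := by
    have heq : mE 2 2 = (b - l • mE 2 0 - c • mE 1 1) - mE 3 1 := by
      ext i j
      fin_cases i <;> fin_cases j <;>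
        simp [mE_apply, hb', lMb, hc, Fin.sum_univ_four, Matrix.vecHead, Matrix.vecTail, Function.comp] <;>
        (try field_simp) <;> (try ring)
    rw [heq]
    exact sub_mem hC hE31
  -- conclude
  apply Set.Subset.antisymm
  · have hle : S ≤ M1alg := by
      apply NonUnitalAlgebra.adjoin_le
      rintro x (rfl | rfl | rfl) <;>
        refine ⟨?_, ?_, ?_, ?_, ?_, ?_, ?_⟩ <;>
          simp [ho', ha', hb', lMo, lMa, lMb, Matrix.vecHead, Matrix.vecTail, Function.comp] <;> (try field_simp) <;> (try ring)
    intro m hm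
    exact hle hm
  · intro m hm
    obtain ⟨m1, m2, m3, m4, m5, m6, m7⟩ := hm
    have hrep : m = m 0 0 • mE 0 0 + m 1 0 • mE 1 0 + m 1 1 • mE 1 1 + m 1 2 • mE 1 2 +
        m 2 0 • mE 2 0 + m 2 2 • mE 2 2 + m 3 0 • mE 3 0 + m 3 1 • mE 3 1 +
        m 3 2 • mE 3 2 := by
      ext i j
      fin_cases i <;> fin_cases j <;>
        simp [mE_apply, m1, m2, m3, m4, m5, m6, m7]
    rw [hrep]
    exact add_mem (add_mem (add_mem (add_mem (add_mem (add_mem (add_mem (add_mem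
      (SMulMemClass.smul_mem _ hE00) (SMulMemClass.smul_mem _ hE10))
      (SMulMemClass.smul_mem _ hE11)) (SMulMemClass.smul_mem _ hE12))
      (SMulMemClass.smul_mem _ hE20)) (SMulMemClass.smul_mem _ hE22))
      (SMulMemClass.smul_mem _ hE30)) (SMulMemClass.smul_mem _ hE31))
      (SMulMemClass.smul_mem _ hE32)
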